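/- Let G(t) be symmetric N×N matrices with σ_min I ⪯ G(t) ⪯ (5/4)σ_max I, and let η satisfy 0 < η ≤ 4/(5σ_max). If s(t+1) = (I − ηG(t))s(t) + χ(t) with ‖χ(t)‖ ≤ (ησ_min/4)‖s(t)‖ for all t, then the loss L(t) := ‖s(t)‖² satisfies L(t) ≤ (1 − ησ_min/2)^{2t} L(0) ≤ (1 − ησ_min/2)^t L(0). -/

import Mathlib

open Matrix
open scoped RealInnerProductSpace

/-! The iteration operator `I - ηG(t)` is symmetric, with quadratic form between
`(1 - η M) ‖x‖² ≥ 0` (here `M = 5/4 σ_max`) and `(1 - η σ_min) ‖x‖²`. The operator norm of a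
symmetric operator is the supremum of its Rayleigh quotient in absolute value, so
`‖(I - ηG(t)) x‖ ≤ (1 - η σ_min) ‖x‖`. The perturbation `χ(t)` adds at most `η σ_min / 4` of
`‖s(t)‖`, hence every step contracts `‖s‖` by the factor `1 - η σ_min / 2 ∈ [0, 1]`; squaring
gives the bound on `L(t)`. -/

section PerturbedGradientDescent

variable {E : Type*} [NormedAddCommGroup E] [InnerProductSpace ℝ E]

theorem ContinuousLinearMap.norm_le_of_abs_inner_le {T : E →L[ℝ] E}
    (hT : (T : E →ₗ[ℝ] E).IsSymmetric) {c : ℝ} (hc : 0 ≤ c)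
    (h : ∀ x, |⟪T x, x⟫| ≤ c * ‖x‖ ^ 2) : ‖T‖ ≤ c := by
  rw [T.norm_eq_iSup_rayleighQuotient hT]
  refine ciSup_le fun x => ?_
  rcases eq_or_ne x 0 with rfl | hx
  · simpa using hc
  · rw [rayleighQuotient, reApplyInnerSelf_apply, RCLike.re_to_real, abs_div, abs_sq,
      div_le_iff₀ (by positivity)]
    exact h x

theorem norm_sub_smul_apply_le {G : E →L[ℝ] E} (hG : (G : E →ₗ[ℝ] E).IsSymmetric)
    {η m M : ℝ} (hη : 0 ≤ η) (hηm : η * m ≤ 1) (hηM : η * M ≤ 1)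
    (hlo : ∀ x, m * ‖x‖ ^ 2 ≤ ⟪G x, x⟫) (hhi : ∀ x, ⟪G x, x⟫ ≤ M * ‖x‖ ^ 2) (x : E) : ‖x - η • G x‖ ≤ (1 - η * m) * ‖x‖ := by
  set T : E →L[ℝ] E := ContinuousLinearMap.id ℝ E - η • G
  have hT : (T : E →ₗ[ℝ] E).IsSymmetric :=
    LinearMap.IsSymmetric.id.sub (hG.smul (conj_trivial η))
  have hTx : ∀ y, ⟪T y, y⟫ = ‖y‖ ^ 2 - η * ⟪G y, y⟫ := fun y => by
    simp [T, inner_sub_left, inner_smul_left]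
  have hnorm : ‖T‖ ≤ 1 - η * m := by
    refine T.norm_le_of_abs_inner_le hT (by linarith) fun y => abs_le.2 ⟨?_, ?_⟩ <;>
      rw [hTx] <;> nlinarith [hlo y, hhi y, sq_nonneg ‖y‖]
  calc ‖x - η • G x‖ = ‖T x‖ := rfl
    _ ≤ ‖T‖ * ‖x‖ := T.le_opNorm x
    _ ≤ (1 - η * m) * ‖x‖ := by gcongr

theorem mul_le_one_of_inner_bounds [Nontrivial E] {G : E →L[ℝ] E} {η m M : ℝ} (hη : 0 ≤ η)
    (hηM : η * M ≤ 1) (hlo : ∀ x, m * ‖x‖ ^ 2 ≤ ⟪G x, x⟫) (hhi : ∀ x, ⟪G x, x⟫ ≤ M * ‖x‖ ^ 2) :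
    η * m ≤ 1 := by
  obtain ⟨x, hx⟩ := exists_ne (0 : E)
  have hmM : m ≤ M := le_of_mul_le_mul_right ((hlo x).trans (hhi x)) (by positivity)
  nlinarith

theorem le_pow_mul_of_le_mul {r : ℕ → ℝ} {c : ℝ} (hc : 0 ≤ c) (hr : ∀ t, r (t + 1) ≤ c * r t) :
    ∀ t, r t ≤ c ^ t * r 0
  | 0 => by simp
  | t + 1 => calc
      r (t + 1) ≤ c * r t := hr t
      _ ≤ c * (c ^ t * r 0) := by gcongr; exact le_pow_mul_of_le_mul hc hr t
      _ = c ^ (t + 1) * r 0 := by ring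

variable [Nontrivial E] {η m M : ℝ} {G : ℕ → E →L[ℝ] E} {s χ : ℕ → E}

theorem norm_perturbedGD_le_pow (hη : 0 ≤ η) (hm : 0 ≤ m) (hηM : η * M ≤ 1)
    (hG : ∀ t, (G t : E →ₗ[ℝ] E).IsSymmetric)
    (hlo : ∀ t x, m * ‖x‖ ^ 2 ≤ ⟪G t x, x⟫) (hhi : ∀ t x, ⟪G t x, x⟫ ≤ M * ‖x‖ ^ 2)
    (hs : ∀ t, s (t + 1) = s t - η • G t (s t) + χ t)
    (hχ : ∀ t, ‖χ t‖ ≤ η * m / 4 * ‖s t‖) (t : ℕ) :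
    ‖s t‖ ≤ (1 - η * m / 2) ^ t * ‖s 0‖ := by
  have hηm := mul_le_one_of_inner_bounds hη hηM (hlo 0) (hhi 0)
  refine le_pow_mul_of_le_mul (r := fun t => ‖s t‖) (by linarith) (fun t => ?_) t
  have hgd := norm_sub_smul_apply_le (hG t) hη hηm hηM (hlo t) (hhi t) (s t)
  calc ‖s (t + 1)‖ ≤ ‖s t - η • G t (s t)‖ + ‖χ t‖ := hs t ▸ norm_add_le _ _
    _ ≤ (1 - η * m) * ‖s t‖ + η * m / 4 * ‖s t‖ := add_le_add hgd (hχ t)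
    _ ≤ (1 - η * m / 2) * ‖s t‖ := by nlinarith [mul_nonneg hη hm, norm_nonneg (s t)]

theorem sq_norm_perturbedGD_le_pow (hη : 0 ≤ η) (hm : 0 ≤ m) (hηM : η * M ≤ 1)
    (hG : ∀ t, (G t : E →ₗ[ℝ] E).IsSymmetric)
    (hlo : ∀ t x, m * ‖x‖ ^ 2 ≤ ⟪G t x, x⟫) (hhi : ∀ t x, ⟪G t x, x⟫ ≤ M * ‖x‖ ^ 2)
    (hs : ∀ t, s (t + 1) = s t - η • G t (s t) + χ t)
    (hχ : ∀ t, ‖χ t‖ ≤ η * m / 4 * ‖s t‖) (t : ℕ) :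
    ‖s t‖ ^ 2 ≤ (1 - η * m / 2) ^ (2 * t) * ‖s 0‖ ^ 2 ∧
      (1 - η * m / 2) ^ (2 * t) * ‖s 0‖ ^ 2 ≤ (1 - η * m / 2) ^ t * ‖s 0‖ ^ 2 := by
  have hηm := mul_le_one_of_inner_bounds hη hηM (hlo 0) (hhi 0)
  refine ⟨?_, ?_⟩
  · calc ‖s t‖ ^ 2 ≤ ((1 - η * m / 2) ^ t * ‖s 0‖) ^ 2 := by
          gcongr; exact norm_perturbedGD_le_pow hη hm hηM hG hlo hhi hs hχ t
      _ = (1 - η * m / 2) ^ (2 * t) * ‖s 0‖ ^ 2 := by ring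
  · gcongr ?_ * _
    exact pow_le_pow_of_le_one (by linarith) (by nlinarith [mul_nonneg hη hm]) (by omega)

end PerturbedGradientDescent

theorem EuclideanSpace.norm_toLp_real {ι : Type*} [Fintype ι] (x : ι → ℝ) :
    ‖WithLp.toLp 2 x‖ = √(∑ i, x i ^ 2) := by
  simp [EuclideanSpace.norm_eq]

theorem Matrix.inner_toEuclideanCLM_self {ι : Type*} [Fintype ι] [DecidableEq ι]
    (A : Matrix ι ι ℝ) (x : EuclideanSpace ℝ ι) :
    ⟪toEuclideanCLM (𝕜 := ℝ) A x, x⟫ = x.ofLp ⬝ᵥ A *ᵥ x.ofLp := by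
  rw [EuclideanSpace.inner_eq_star_dotProduct]
  simp

theorem Matrix.IsSymm.isSymmetric_toEuclideanCLM {ι : Type*} [Fintype ι] [DecidableEq ι]
    {A : Matrix ι ι ℝ} (hA : A.IsSymm) :
    (toEuclideanCLM (𝕜 := ℝ) A : EuclideanSpace ℝ ι →ₗ[ℝ] EuclideanSpace ℝ ι).IsSymmetric := by
  rw [coe_toEuclideanCLM_eq_toEuclideanLin, isSymmetric_toEuclideanLin_iff, IsHermitian,
    conjTranspose_eq_transpose_of_trivial]
  exact hA

/-- Abstract form of the discrete GD global linear convergence (Theorem 1): if the Gram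
matrices are symmetric with `σ_min I ⪯ G(t) ⪯ (5/4) σ_max I`, the step size satisfies
`0 < η ≤ 4/(5 σ_max)`, and `s(t+1) = (I - η G(t)) s(t) + χ(t)` with
`‖χ(t)‖ ≤ (η σ_min/4) ‖s(t)‖`, then `L(t) = ‖s(t)‖²` satisfies
`L(t) ≤ (1 - η σ_min/2)^{2t} L(0) ≤ (1 - η σ_min/2)^t L(0)`. -/
theorem stmt_19 (N : ℕ) (η σmin σmax : ℝ)
    (hσmin : 0 < σmin) (hσmax : 0 < σmax)
    (hη : 0 < η) (hη' : η ≤ 4 / (5 * σmax))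
    (G : ℕ → Matrix (Fin N) (Fin N) ℝ)
    (hGsymm : ∀ t, (G t).IsSymm)
    (hGlo : ∀ t, ∀ x : Fin N → ℝ, σmin * ∑ i, x i ^ 2 ≤ x ⬝ᵥ (G t).mulVec x)
    (hGhi : ∀ t, ∀ x : Fin N → ℝ, x ⬝ᵥ (G t).mulVec x ≤ 5 / 4 * σmax * ∑ i, x i ^ 2)
    (s χ : ℕ → Fin N → ℝ)
    (hrec : ∀ t, s (t + 1) = (s t - η • (G t).mulVec (s t)) + χ t)
    (hχ : ∀ t, Real.sqrt (∑ i, χ t i ^ 2) ≤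
      η * σmin / 4 * Real.sqrt (∑ i, s t i ^ 2)) :
    ∀ t, (∑ i, s t i ^ 2) ≤ (1 - η * σmin / 2) ^ (2 * t) * ∑ i, s 0 i ^ 2 ∧
      (1 - η * σmin / 2) ^ (2 * t) * (∑ i, s 0 i ^ 2) ≤
        (1 - η * σmin / 2) ^ t * ∑ i, s 0 i ^ 2 := by
  intro t
  rcases eq_or_ne N 0 with rfl | hN
  · simp
  have : NeZero N := ⟨hN⟩
  have hsq (x : Fin N → ℝ) : ∑ i, x i ^ 2 = ‖WithLp.toLp 2 x‖ ^ 2 := by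
    rw [EuclideanSpace.norm_toLp_real, Real.sq_sqrt (by positivity)]
  have hηM : η * (5 / 4 * σmax) ≤ 1 := by
    rw [le_div_iff₀ (by positivity)] at hη'
    linarith
  simp only [hsq]
  refine sq_norm_perturbedGD_le_pow (G := fun t => toEuclideanCLM (𝕜 := ℝ) (G t))
    (s := fun t => WithLp.toLp 2 (s t)) (χ := fun t => WithLp.toLp 2 (χ t)) hη.le hσmin.le hηM
    (fun t => (hGsymm t).isSymmetric_toEuclideanCLM) (fun t x => ?_) (fun t x => ?_)
    (fun t => ?_) (fun t => ?_) t
  · rw [inner_toEuclideanCLM_self, EuclideanSpace.real_norm_sq_eq]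
    exact hGlo t x.ofLp
  · rw [inner_toEuclideanCLM_self, EuclideanSpace.real_norm_sq_eq]
    exact hGhi t x.ofLp
  · simp [hrec t]
  · simpa only [EuclideanSpace.norm_toLp_real] using hχ t
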